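/- Let I be an independent set of an even-hole-free graph G, and let k ≤ |I|. Let J be an independent set of G with I TAR_k-reachable to J maximizing |J|. Then |J| = |I| if I is a dominating set of size k, and |J| = α(G) otherwise. -/

import Mathlib

open Finset

variable {V : Type*}

/-- `I` is an independent set of `G`. -/
def IsIndep (G : SimpleGraph V) (I : Finset V) : Prop :=
  ∀ u ∈ I, ∀ v ∈ I, ¬ G.Adj u v

/-- One token addition or removal between independent sets of size at least `k`. -/
def TarStep [DecidableEq V] (G : SimpleGraph V) (k : ℕ) (I J : Finset V) : Prop :=
  IsIndep G I ∧ IsIndep G J ∧ k ≤ I.card ∧ k ≤ J.card ∧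
    ∃ v : V, J = insert v I ∨ I = insert v J

/-- TAR-reachability with token lower bound `k`. -/
def TarReach [DecidableEq V] (G : SimpleGraph V) (k : ℕ) (I J : Finset V) : Prop :=
  Relation.ReflTransGen (TarStep G k) I J

/-- TAR-reachability inside the subgraph of `G` induced by `S`. -/
def TarReachOn [DecidableEq V] (G : SimpleGraph V) (S : Finset V) (k : ℕ)
    (I J : Finset V) : Prop :=
  Relation.ReflTransGen (fun I J => I ⊆ S ∧ J ⊆ S ∧ TarStep G k I J) I J

/-- `G` has an induced cycle on `n` vertices. -/
def HasInducedCycle (G : SimpleGraph V) (n : ℕ) : Prop :=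
  ∃ f : ZMod n → V, Function.Injective f ∧
    ∀ i j : ZMod n, G.Adj (f i) (f j) ↔ (i = j + 1 ∨ j = i + 1)

/-- `G` is even-hole-free: it has no induced even cycle. -/
def EvenHoleFree (G : SimpleGraph V) : Prop :=
  ∀ n : ℕ, 4 ≤ n → Even n → ¬ HasInducedCycle G n

/-- `D` is a dominating set of `G`. -/
def IsDominating (G : SimpleGraph V) (D : Finset V) : Prop :=
  ∀ v : V, v ∈ D ∨ ∃ u ∈ D, G.Adj u v

/-- The independence number of `G`. -/
noncomputable def alpha (G : SimpleGraph V) : ℕ :=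
  sSup {m | ∃ J : Finset V, IsIndep G J ∧ J.card = m}

/-!
Inside the union of two independent sets every edge joins one to the other, so every cycle
there is even, and a shortest one is chordless, i.e. an even hole. In an even-hole-free graph
such a union therefore has a vertex with at most one neighbour in it, and peeling off these
vertices shows: if `|X| < |Y|`, some `y ∈ Y` has at most one neighbour in `X`. Taking `X = A \ B`
and `Y = B \ A`, the vertex `y` can be added to `A`, or exchanged for its unique neighbour,
which shrinks `A \ B`. So a reachable set with more than `k` tokens can always be enlarged up
to `α(G)`, while a dominating set of size `k` admits no move at all.
-/

section

variable {G : SimpleGraph V} {l : List V}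

lemma IsIndep.mono {A B : Finset V} (hB : IsIndep G B) (h : A ⊆ B) : IsIndep G A :=
  fun u hu v hv => hB u (h hu) v (h hv)

lemma alpha_eq_card {J : Finset V} (hJ : IsIndep G J)
    (hmax : ∀ B, IsIndep G B → B.card ≤ J.card) : alpha G = J.card :=
  IsGreatest.csSup_eq ⟨⟨J, hJ, rfl⟩, by rintro _ ⟨B, hB, rfl⟩; exact hmax B hB⟩

def IsCycleList (G : SimpleGraph V) (l : List V) : Prop :=
  3 ≤ l.length ∧ l.Nodup ∧ ∀ i (hi : i < l.length),
    G.Adj l[i] (l[(i + 1) % l.length]'(Nat.mod_lt _ (Nat.zero_lt_of_lt hi)))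

def IsChordlessCycleList (G : SimpleGraph V) (l : List V) : Prop :=
  IsCycleList G l ∧ ∀ i j (hi : i < l.length) (hj : j < l.length), G.Adj l[i] l[j] →
    j = (i + 1) % l.length ∨ i = (j + 1) % l.length

lemma isCycleList_take_of_adj (hnd : l.Nodup) (hch : l.IsChain G.Adj) {j : ℕ} (hj : 2 ≤ j)
    (hjl : j < l.length) (hadj : G.Adj (l[0]'(by omega)) l[j]) :
    IsCycleList G (l.take (j + 1)) := by
  have hlen : (l.take (j + 1)).length = j + 1 := by rw [List.length_take]; omega
  refine ⟨by omega, hnd.sublist (List.take_sublist _ _), fun i hi => ?_⟩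
  simp only [List.getElem_take, hlen]
  rcases (show i < j ∨ i = j by omega) with hi | rfl
  · simp only [Nat.mod_eq_of_lt (show i + 1 < j + 1 by omega)]
    exact hch.getElem i (by omega)
  · simpa using hadj.symm

lemma IsCycleList.isChain (h : IsCycleList G l) : l.IsChain G.Adj :=
  List.isChain_iff_getElem.2 fun i hi => by
    simpa [Nat.mod_eq_of_lt hi] using h.2.2 i (by omega)

lemma IsCycleList.take_drop_of_adj (h : IsCycleList G l) {a b : ℕ} (hab : a + 2 ≤ b)
    (hb : b < l.length) (hadj : G.Adj l[a] l[b]) :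
    IsCycleList G ((l.drop a).take (b - a + 1)) :=
  isCycleList_take_of_adj (h.2.1.sublist (List.drop_sublist _ _)) (h.isChain.drop a) (by omega)
    (by rw [List.length_drop]; omega)
    (by simpa [Nat.add_sub_cancel' (by omega : a ≤ b)] using hadj)

lemma IsCycleList.exists_isChordlessCycleList {S : Finset V} (h : IsCycleList G l)
    (hS : ∀ v ∈ l, v ∈ S) : ∃ c, IsChordlessCycleList G c ∧ ∀ v ∈ c, v ∈ S := by
  classical
  let P n := ∃ c, IsCycleList G c ∧ (∀ v ∈ c, v ∈ S) ∧ c.length = n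
  have hP : ∃ n, P n := ⟨_, l, h, hS, rfl⟩
  obtain ⟨p, hp, hpS, hlen⟩ : P (Nat.find hP) := Nat.find_spec hP
  have hp3 := hp.1
  have hchord : ∀ a b (hab : a < b) (hb : b < p.length), G.Adj p[a] p[b] →
      b = a + 1 ∨ (a = 0 ∧ b = p.length - 1) := by
    intro a b hab hb hadj
    by_contra hne
    have hsub := hp.take_drop_of_adj (a := a) (b := b) (by omega) hb hadj
    have hshort : ((p.drop a).take (b - a + 1)).length < Nat.find hP := by
      simp only [List.length_take, List.length_drop]; omega
    exact Nat.find_min hP hshort ⟨_, hsub,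
      fun v hv => hpS v ((List.take_sublist _ _).trans (List.drop_sublist _ _) |>.mem hv), rfl⟩
  refine ⟨p, ⟨hp, fun a b ha hb hadj => ?_⟩, hpS⟩
  rcases lt_trichotomy a b with hab | rfl | hba
  · rcases hchord a b hab hb hadj with rfl | ⟨rfl, rfl⟩
    · exact .inl (Nat.mod_eq_of_lt hb).symm
    · exact .inr (by rw [Nat.sub_add_cancel (by omega), Nat.mod_self])
  · exact absurd hadj G.irrefl
  · rcases hchord b a hba ha hadj.symm with rfl | ⟨rfl, rfl⟩
    · exact .inr (Nat.mod_eq_of_lt ha).symm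
    · exact .inl (by rw [Nat.sub_add_cancel (by omega), Nat.mod_self])

lemma IsChordlessCycleList.hasInducedCycle (h : IsChordlessCycleList G l) :
    HasInducedCycle G l.length := by
  obtain ⟨⟨h3, hnd, hcyc⟩, hchord⟩ := h
  have : NeZero l.length := ⟨by omega⟩
  have : Fact (1 < l.length) := ⟨by omega⟩
  have hsucc (i j : ZMod l.length) : i = j + 1 ↔ i.val = (j.val + 1) % l.length := by
    rw [← ZMod.val_one l.length, ← ZMod.val_add, (ZMod.val_injective _).eq_iff]
  refine ⟨fun i => l[i.val]'i.val_lt,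
    fun i j hij => ZMod.val_injective _ (hnd.getElem_inj_iff.1 hij), fun i j => ?_⟩
  rw [hsucc, hsucc]
  refine ⟨fun hadj => (hchord _ _ _ _ hadj).symm, ?_⟩
  rintro (hij | hji)
  · simpa only [← hij] using (hcyc j.val j.val_lt).symm
  · simpa only [← hji] using hcyc i.val i.val_lt

lemma exists_isCycleList_of_adj_mem {u : V} {t : List V} (hnd : (u :: t).Nodup)
    (hch : (u :: t).IsChain G.Adj) {w₁ w₂ : V} (hne : w₁ ≠ w₂) (hw₁ : G.Adj u w₁)
    (hw₂ : G.Adj u w₂) (h₁ : w₁ ∈ u :: t) (h₂ : w₂ ∈ u :: t) :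
    ∃ c, IsCycleList G c ∧ ∀ v ∈ c, v ∈ u :: t := by
  have hidx (x : V) (hux : G.Adj u x) (hx : x ∈ u :: t) :
      ∃ j, ∃ hj : j < (u :: t).length, 1 ≤ j ∧ (u :: t)[j] = x := by
    obtain ⟨j, hj, rfl⟩ := List.getElem_of_mem hx
    refine ⟨j, hj, Nat.one_le_iff_ne_zero.2 ?_, rfl⟩
    rintro rfl
    exact G.irrefl hux
  obtain ⟨j₁, hj₁, h1j₁, rfl⟩ := hidx w₁ hw₁ h₁
  obtain ⟨j₂, hj₂, h1j₂, rfl⟩ := hidx w₂ hw₂ h₂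
  have hj : j₁ ≠ j₂ := by rintro rfl; exact hne rfl
  have hsub (j : ℕ) (v : V) (hv : v ∈ (u :: t).take (j + 1)) : v ∈ u :: t :=
    List.mem_of_mem_take hv
  rcases (show 2 ≤ j₁ ∨ 2 ≤ j₂ by omega) with h | h
  · exact ⟨_, isCycleList_take_of_adj hnd hch h hj₁ hw₁, hsub _⟩
  · exact ⟨_, isCycleList_take_of_adj hnd hch h hj₂ hw₂, hsub _⟩

lemma exists_isCycleList_of_nontrivial_neighborSet {S : Finset V} (hS : S.Nonempty)
    (hdeg : ∀ v ∈ S, ((S : Set V) ∩ G.neighborSet v).Nontrivial) :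
    ∃ l, IsCycleList G l ∧ ∀ v ∈ l, v ∈ S := by
  classical
  let IsPathIn (l : List V) : Prop := l.Nodup ∧ l.IsChain G.Adj ∧ ∀ v ∈ l, v ∈ S
  have hbound (l : List V) (hl : IsPathIn l) : l.length ≤ S.card := by
    rw [← List.toFinset_card_of_nodup hl.1]
    exact card_le_card fun v hv => hl.2.2 v (List.mem_toFinset.1 hv)
  let P n := ∃ l, IsPathIn l ∧ l.length = n
  obtain ⟨v, hv⟩ := hS
  obtain ⟨w, hwS, hvw⟩ := (hdeg v hv).nonempty
  have hvw : G.Adj w v := hvw.symm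
  have hpath : IsPathIn [w, v] :=
    ⟨by simp [hvw.ne], by simpa using hvw, by simp [hv, Finset.mem_coe.1 hwS]⟩
  have h2 : 2 ≤ S.card := hbound _ hpath
  have hP2 : P 2 := ⟨_, hpath, rfl⟩
  -- all neighbours of the first vertex `u` of a longest path in `S` lie on that path
  obtain ⟨l, ⟨hnd, hch, hmem⟩, hlen⟩ : P (Nat.findGreatest P S.card) :=
    Nat.findGreatest_spec h2 hP2
  have hlong : 2 ≤ l.length := hlen ▸ Nat.le_findGreatest h2 hP2
  obtain _ | ⟨u, t⟩ := l
  · simp at hlong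
  have hnbr : ∀ x ∈ S, G.Adj u x → x ∈ u :: t := by
    intro x hxS hux
    by_contra hx
    have hext : IsPathIn (x :: u :: t) :=
      ⟨List.nodup_cons.2 ⟨hx, hnd⟩, List.isChain_cons_cons.2 ⟨hux.symm, hch⟩,
        List.forall_mem_cons.2 ⟨hxS, hmem⟩⟩
    refine Nat.findGreatest_is_greatest (P := P) ?_ (hbound _ hext) ⟨_, hext, rfl⟩
    simp only [List.length_cons] at hlen ⊢
    omega
  obtain ⟨w₁, ⟨hw₁S, hw₁⟩, w₂, ⟨hw₂S, hw₂⟩, hne⟩ :=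
    hdeg u (hmem u List.mem_cons_self)
  obtain ⟨c, hc, hcl⟩ := exists_isCycleList_of_adj_mem hnd hch hne hw₁ hw₂
    (hnbr w₁ hw₁S hw₁) (hnbr w₂ hw₂S hw₂)
  exact ⟨c, hc, fun v hv => hmem v (hcl v hv)⟩

lemma mem_iff_notMem_of_adj [DecidableEq V] {X Y : Finset V} (hX : IsIndep G X)
    (hY : IsIndep G Y) {u v : V} (hu : u ∈ X ∪ Y) (hv : v ∈ X ∪ Y) (huv : G.Adj u v) :
    u ∈ X ↔ v ∉ X := by
  rw [mem_union] at hu hv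
  constructor
  · exact fun huX hvX => hX u huX v hvX huv
  · intro hvX
    by_contra huX
    exact hY u (hu.resolve_left huX) v (hv.resolve_left hvX) huv

lemma IsCycleList.even_length [DecidableEq V] {X Y : Finset V} (h : IsCycleList G l)
    (hX : IsIndep G X) (hY : IsIndep G Y) (hl : ∀ v ∈ l, v ∈ X ∪ Y) : Even l.length := by
  obtain ⟨h3, -, hcyc⟩ := h
  have halt : ∀ i (hi : i < l.length), (l[i] ∈ X ↔ (l[0] ∈ X ↔ Even i)) := by
    intro i
    induction i with
    | zero => simp
    | succ i ih =>
      intro hi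
      have hstep := mem_iff_notMem_of_adj hX hY (hl _ (List.getElem_mem _))
        (hl _ (List.getElem_mem _)) (hcyc i (by omega))
      simp only [Nat.mod_eq_of_lt hi] at hstep
      rw [Nat.even_add_one]
      have := ih (by omega)
      tauto
  have hlast := mem_iff_notMem_of_adj hX hY (hl _ (List.getElem_mem _))
    (hl _ (List.getElem_mem _)) (hcyc (l.length - 1) (by omega))
  simp only [Nat.sub_add_cancel (by omega : 1 ≤ l.length), Nat.mod_self] at hlast
  have := halt (l.length - 1) (by omega)
  have hodd : ¬ Even (l.length - 1) := by tauto
  rw [Nat.even_iff] at hodd ⊢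
  omega

theorem EvenHoleFree.not_forall_nontrivial_neighborSet [DecidableEq V] (hG : EvenHoleFree G)
    {X Y : Finset V} (hX : IsIndep G X) (hY : IsIndep G Y) (hne : (X ∪ Y).Nonempty) :
    ¬ ∀ v ∈ X ∪ Y, ((↑(X ∪ Y) : Set V) ∩ G.neighborSet v).Nontrivial := fun hdeg => by
  obtain ⟨l, hl, hlS⟩ := exists_isCycleList_of_nontrivial_neighborSet hne hdeg
  obtain ⟨c, hc, hcS⟩ := hl.exists_isChordlessCycleList hlS
  have heven := hc.1.even_length hX hY hcS
  have h3 := hc.1.1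
  exact hG c.length (by obtain ⟨m, hm⟩ := heven; omega) heven hc.hasInducedCycle

theorem EvenHoleFree.exists_subsingleton_neighborSet (hG : EvenHoleFree G)
    {X Y : Finset V} (hX : IsIndep G X) (hY : IsIndep G Y) (hXY : X.card < Y.card) :
    ∃ y ∈ Y, ((X : Set V) ∩ G.neighborSet y).Subsingleton := by
  classical
  induction X using Finset.strongInduction generalizing Y with
  | H X ih =>
  by_cases hx : ∃ x ∈ X, ((Y : Set V) ∩ G.neighborSet x).Subsingleton
  · obtain ⟨x, hxX, hxY⟩ := hx
    have hY' : Y.card ≤ (Y.filter (fun y => ¬ G.Adj x y)).card + 1 := by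
      have hN : (Y.filter (fun y => G.Adj x y)).card ≤ 1 := card_le_one.2 fun a ha b hb => by
        rw [mem_filter] at ha hb
        exact hxY ⟨ha.1, ha.2⟩ ⟨hb.1, hb.2⟩
      have := card_filter_add_card_filter_not (s := Y) (fun y => G.Adj x y)
      omega
    have hx := card_pos.2 ⟨x, hxX⟩
    obtain ⟨y, hy, hsub⟩ := ih (X.erase x) (erase_ssubset hxX)
      (Y := Y.filter (fun y => ¬ G.Adj x y)) (hX.mono (erase_subset _ _))
      (hY.mono (filter_subset _ _)) (by rw [card_erase_of_mem hxX]; omega)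
    rw [mem_filter] at hy
    refine ⟨y, hy.1, hsub.anti fun z ⟨hzX, hyz⟩ => ⟨?_, hyz⟩⟩
    have hzx : z ≠ x := by rintro rfl; exact hy.2 (G.adj_symm hyz)
    exact mem_erase.2 ⟨hzx, hzX⟩
  · simp only [not_exists, not_and, Set.not_subsingleton_iff] at hx
    by_contra! hy
    obtain ⟨y₀, hy₀⟩ := card_pos.1 (by omega : 0 < Y.card)
    refine hG.not_forall_nontrivial_neighborSet hX hY ⟨y₀, mem_union_right _ hy₀⟩
      fun v hv => ?_
    rcases mem_union.1 hv with hvX | hvY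
    · exact (hx v hvX).mono (Set.inter_subset_inter_left _ (by simp))
    · exact (hy v hvY).mono (Set.inter_subset_inter_left _ (by simp))

end

section Reconfiguration

variable [DecidableEq V] {G : SimpleGraph V} {k : ℕ}

lemma IsIndep.insert {A : Finset V} (hA : IsIndep G A) {y : V} (hy : ∀ u ∈ A, ¬ G.Adj u y) :
    IsIndep G (insert y A) := by
  intro u hu v hv huv
  rw [mem_insert] at hu hv
  rcases hu with rfl | hu <;> rcases hv with rfl | hv
  · exact G.irrefl huv
  · exact hy v hv huv.symm
  · exact hy u hu huv
  · exact hA u hu v hv huv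

lemma TarReach.isIndep {I J : Finset V} (h : TarReach G k I J) (hI : IsIndep G I) :
    IsIndep G J := by
  induction h with
  | refl => exact hI
  | tail _ hstep _ => exact hstep.2.1

lemma tarReach_insert {A : Finset V} (hA : IsIndep G A) (hk : k ≤ A.card) {y : V}
    (hy : ∀ u ∈ A, ¬ G.Adj u y) : TarReach G k A (insert y A) :=
  .single ⟨hA, hA.insert hy, hk, hk.trans (card_le_card (subset_insert _ _)), y, .inl rfl⟩

lemma tarReach_insert_erase {A : Finset V} (hA : IsIndep G A) (hk : k < A.card) {x y : V}
    (hx : x ∈ A) (hy : ∀ u ∈ A.erase x, ¬ G.Adj u y) :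
    TarReach G k A (insert y (A.erase x)) :=
  have hAx : IsIndep G (A.erase x) := hA.mono (erase_subset _ _)
  have hk' : k ≤ (A.erase x).card := by rw [card_erase_of_mem hx]; omega
  .head ⟨hA, hAx, hk.le, hk', x, .inr (insert_erase hx).symm⟩ (tarReach_insert hAx hk' hy)

lemma exists_tarReach_card_lt_or_card_sdiff_lt {A B : Finset V} (hA : IsIndep G A)
    (hB : IsIndep G B) (hk : k < A.card) {y : V} (hyB : y ∈ B) (hyA : y ∉ A)
    (hsub : ((↑(A \ B) : Set V) ∩ G.neighborSet y).Subsingleton) :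
    ∃ A₁, TarReach G k A A₁ ∧
      (A.card < A₁.card ∨ A₁.card = A.card ∧ (A₁ \ B).card < (A \ B).card) := by
  have hnbr (u : V) (hu : u ∈ A) (huy : G.Adj u y) : u ∈ A \ B :=
    mem_sdiff.2 ⟨hu, fun huB => hB u huB y hyB huy⟩
  by_cases hfree : ∀ u ∈ A, ¬ G.Adj u y
  · exact ⟨_, tarReach_insert hA hk.le hfree, .inl (by rw [card_insert_of_notMem hyA]; omega)⟩
  obtain ⟨x, hxA, hxy⟩ : ∃ x ∈ A, G.Adj x y := by simpa using hfree
  -- `x` is the only neighbour of `y` in `A`, so `y` can replace it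
  have hx : x ∈ A \ B := hnbr x hxA hxy
  have hfree' : ∀ u ∈ A.erase x, ¬ G.Adj u y := fun u hu huy =>
    (mem_erase.1 hu).1 (hsub ⟨hnbr u (mem_of_mem_erase hu) huy, huy.symm⟩ ⟨hx, hxy.symm⟩)
  refine ⟨_, tarReach_insert_erase hA hk hxA hfree', .inr ⟨?_, ?_⟩⟩
  · rw [card_insert_of_notMem fun h => hyA (mem_of_mem_erase h), card_erase_of_mem hxA]
    have := card_pos.2 ⟨x, hxA⟩
    omega
  · refine (card_le_card fun u hu => ?_).trans_lt (card_erase_lt_of_mem hx)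
    obtain ⟨hu, huB⟩ := mem_sdiff.1 hu
    rcases mem_insert.1 hu with rfl | hu
    · exact absurd hyB huB
    · exact mem_erase.2 ⟨(mem_erase.1 hu).1, mem_sdiff.2 ⟨mem_of_mem_erase hu, huB⟩⟩

theorem EvenHoleFree.exists_tarReach_card_lt (hG : EvenHoleFree G) {A B : Finset V}
    (hA : IsIndep G A) (hB : IsIndep G B) (hk : k < A.card) (hAB : A.card < B.card) :
    ∃ A', TarReach G k A A' ∧ A.card < A'.card := by
  obtain ⟨n, hn⟩ : ∃ n, (A \ B).card = n := ⟨_, rfl⟩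
  induction n using Nat.strong_induction_on generalizing A with
  | _ n ih =>
  have hlt : (A \ B).card < (B \ A).card := by
    have := card_sdiff_add_card_inter A B
    have := card_sdiff_add_card_inter B A
    rw [inter_comm] at this
    omega
  obtain ⟨y, hy, hsub⟩ :=
    hG.exists_subsingleton_neighborSet (hA.mono sdiff_subset) (hB.mono sdiff_subset) hlt
  obtain ⟨hyB, hyA⟩ := mem_sdiff.1 hy
  obtain ⟨A₁, hA₁, hgrow | ⟨hcard, hdiff⟩⟩ :=
    exists_tarReach_card_lt_or_card_sdiff_lt hA hB hk hyB hyA hsub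
  · exact ⟨A₁, hA₁, hgrow⟩
  · obtain ⟨A', hA', hlt'⟩ := ih _ (hn ▸ hdiff) (hA₁.isIndep hA) (by omega) (by omega) rfl
    exact ⟨A', hA₁.trans hA', by omega⟩

lemma TarReach.eq_of_isDominating {I J : Finset V} (hdom : IsDominating G I) (hI : I.card = k)
    (h : TarReach G k I J) : J = I := by
  induction h with
  | refl => rfl
  | tail _ hstep ih =>
    subst ih
    obtain ⟨-, hJ, -, hk, v, hv | hv⟩ := hstep
    · rcases hdom v with hvI | ⟨u, hu, huv⟩
      · rw [hv, insert_eq_of_mem hvI]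
      · exact absurd huv (hJ u (hv ▸ mem_insert_of_mem hu) v (hv ▸ mem_insert_self v _))
    · exact eq_of_subset_of_card_le (hv ▸ subset_insert v _) (hI ▸ hk)

end Reconfiguration

/-- In an even-hole-free graph, a maximum-size independent set `J` reachable
from `I` in the TAR_k model has size `|I|` if `I` is a dominating set of size
`k`, and size `α(G)` otherwise. -/
theorem even_hole_free_ris [DecidableEq V] (G : SimpleGraph V)
    (hG : EvenHoleFree G) (I : Finset V) (hI : IsIndep G I) (k : ℕ)
    (hk : k ≤ I.card) (J : Finset V) (hJ : TarReach G k I J)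
    (hmax : ∀ J' : Finset V, TarReach G k I J' → J'.card ≤ J.card) :
    (IsDominating G I ∧ I.card = k → J.card = I.card) ∧
    (¬ (IsDominating G I ∧ I.card = k) → J.card = alpha G) := by
  refine ⟨fun ⟨hdom, hIk⟩ => by rw [hJ.eq_of_isDominating hdom hIk], fun hnot => ?_⟩
  have hkJ : k < J.card := by
    by_cases hIk : I.card = k
    · obtain ⟨v, hvI, hv⟩ : ∃ v, v ∉ I ∧ ∀ u ∈ I, ¬ G.Adj u v := by
        simpa [IsDominating] using fun h => hnot ⟨h, hIk⟩
      have := hmax _ (tarReach_insert hI hk hv)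
      rw [card_insert_of_notMem hvI] at this
      omega
    · have := hmax I .refl
      omega
  have hJI := hJ.isIndep hI
  refine (alpha_eq_card hJI fun B hB => ?_).symm
  by_contra! hlt
  obtain ⟨J', hJ', hlt'⟩ := hG.exists_tarReach_card_lt hJI hB hkJ hlt
  exact (hmax J' (hJ.trans hJ')).not_gt hlt'
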